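/- arXiv:2305.11249 — 7 statements merged into one kernel-verified Lean document; each statement's English description precedes it below -/
import Mathlib

section
/- Let m, n be positive integers, ζ ∈ ℂ a primitive m-th root of unity, y ∈ (ℤ/mℤ)^n with exactly t zero coordinates, and 0 ≤ z ≤ n. Then ∑_{x ∈ (ℤ/mℤ)^n with exactly z zero coordinates} ζ^{y·x} = ∑_{ℓ=0}^{n-z} (m-1)^ℓ · (-1)^{n-z-ℓ} · C(t, ℓ) · C(n - t, n - z - ℓ), where y·x = ∑_i y_i x_i. -/
/-!
Group the vectors `x` by their zero set `S`. Since `x ↦ ζ ^ (y · x).val` is multiplicative in the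
coordinates, the sum over the vectors with zero set exactly `S` factors as
`∏_{i ∉ S} ∑_{a ≠ 0} ζ ^ (y i * a).val`, and by orthogonality of the primitive character
`a ↦ ζ ^ a.val` each factor is `m - 1` if `y i = 0` and `-1` otherwise. Summing over the
`(n - z)`-sets `U = Sᶜ` and sorting them by `ℓ = #(U ∩ {i | y i = 0})` leaves a count of
`C(t, ℓ) * C(n - t, n - z - ℓ)` sets for each `ℓ`.
-/

open Finset

lemma AddChar.map_sum_eq_prod {ι A M : Type*} [AddCommMonoid A] [CommMonoid M]
    (ψ : AddChar A M) (s : Finset ι) (f : ι → A) :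
    ψ (∑ i ∈ s, f i) = ∏ i ∈ s, ψ (f i) := by
  induction s using Finset.cons_induction with
  | empty => simp
  | cons a s ha ih => rw [sum_cons, prod_cons, map_add_eq_mul, ih]

lemma AddChar.sum_compl_zero_mulShift {R F : Type*} [CommRing R] [Fintype R] [DecidableEq R]
    [Field F] {ψ : AddChar R F} (hψ : ψ.IsPrimitive) (b : R) :
    ∑ a ∈ {0}ᶜ, ψ (b * a) = if b = 0 then (Fintype.card R : F) - 1 else -1 := by
  have h := AddChar.sum_mulShift b hψ
  rw [← sum_compl_add_sum {0}, sum_singleton, zero_mul, map_zero_eq_one] at h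
  simp_rw [mul_comm _ b] at h
  split_ifs at h ⊢ <;> linear_combination h

variable {ι : Type*} [Fintype ι] [DecidableEq ι]

lemma card_filter_powersetCard_card_inter (T : Finset ι) {k ℓ : ℕ} (hℓ : ℓ ≤ k) :
    #{U ∈ powersetCard k univ | #(U ∩ T) = ℓ} = (#T).choose ℓ * (#Tᶜ).choose (k - ℓ) := by
  have hsplit : ∀ {A B : Finset ι}, A ⊆ T → B ⊆ Tᶜ → (A ∪ B) ∩ T = A ∧ (A ∪ B) \ T = B := by
    intro A B hA hB
    constructor <;> ext x <;> (have := @hA x; have := @hB x; simp at *; tauto)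
  rw [← card_powersetCard ℓ T, ← card_powersetCard (k - ℓ) Tᶜ, ← card_product]
  refine card_nbij' (fun U => (U ∩ T, U \ T)) (fun p => p.1 ∪ p.2) ?_ ?_ ?_ ?_
  · intro U hU
    simp only [coe_filter, mem_powersetCard_univ, Set.mem_ofPred_eq] at hU
    have := card_inter_add_card_sdiff U T
    simp only [coe_product, Set.mem_prod, mem_coe, mem_powersetCard]
    exact ⟨⟨inter_subset_right, hU.2⟩, fun x hx => by simp_all, by omega⟩
  · rintro ⟨A, B⟩ hAB
    simp only [coe_product, Set.mem_prod, mem_coe, mem_powersetCard] at hAB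
    obtain ⟨⟨hAT, hA⟩, hBT, hB⟩ := hAB
    have hdisj : Disjoint A B :=
      disjoint_of_subset_left hAT (subset_compl_iff_disjoint_left.1 hBT)
    simp only [coe_filter, mem_powersetCard_univ, Set.mem_ofPred_eq,
      card_union_of_disjoint hdisj, (hsplit hAT hBT).1]
    omega
  · intro U _
    exact (union_comm _ _).trans (sdiff_union_inter U T)
  · rintro ⟨A, B⟩ hAB
    simp only [coe_product, Set.mem_prod, mem_coe, mem_powersetCard] at hAB
    exact Prod.ext (hsplit hAB.1.1 hAB.2.1).1 (hsplit hAB.1.1 hAB.2.1).2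

lemma sum_powersetCard_prod_ite {M : Type*} [CommSemiring M] (T : Finset ι) (A B : M) (k : ℕ) :
    ∑ U ∈ powersetCard k univ, ∏ i ∈ U, (if i ∈ T then A else B) =
      ∑ ℓ ∈ range (k + 1), A ^ ℓ * B ^ (k - ℓ) * (#T).choose ℓ * (#Tᶜ).choose (k - ℓ) := by
  have hmaps : ∀ U ∈ powersetCard k univ, #(U ∩ T) ∈ range (k + 1) := fun U hU =>
    mem_range_succ_iff.2 <| (card_le_card inter_subset_left).trans (mem_powersetCard_univ.1 hU).le
  rw [← sum_fiberwise_of_maps_to hmaps]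
  refine sum_congr rfl fun ℓ hℓ => ?_
  have hterm : ∀ U ∈ (powersetCard k univ).filter (fun U => #(U ∩ T) = ℓ),
      ∏ i ∈ U, (if i ∈ T then A else B) = A ^ ℓ * B ^ (k - ℓ) := by
    intro U hU
    rw [mem_filter, mem_powersetCard_univ] at hU
    rw [prod_ite, filter_mem_eq_inter, ← sdiff_eq_filter, prod_const, prod_const, ← hU.2, ← hU.1,
      ← card_inter_add_card_sdiff U T, Nat.add_sub_cancel_left]
  rw [sum_congr rfl hterm, sum_const, card_filter_powersetCard_card_inter T
    (Nat.lt_succ_iff.1 (mem_range.1 hℓ)), nsmul_eq_mul]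
  push_cast
  ring

section ZeroSet

variable {R M : Type*} [Zero R] [Fintype R] [DecidableEq R] [CommSemiring M]

lemma sum_filter_zeroSet_eq_prod (f : ι → R → M) (hf : ∀ i, f i 0 = 1) (S : Finset ι) :
    ∑ x ∈ univ.filter (fun x : ι → R => univ.filter (fun i => x i = 0) = S), ∏ i, f i (x i) =
      ∏ i ∈ Sᶜ, ∑ a ∈ {0}ᶜ, f i a := by
  have hpi : univ.filter (fun x : ι → R => univ.filter (fun i => x i = 0) = S) =
      Fintype.piFinset (fun i => if i ∈ S then {0} else {0}ᶜ) := by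
    ext x
    simp only [mem_filter, mem_univ, true_and, Fintype.mem_piFinset, Finset.ext_iff]
    refine forall_congr' fun i => ?_
    by_cases hi : i ∈ S <;> simp [hi]
  rw [hpi, ← prod_univ_sum, ← prod_mul_prod_compl S]
  rw [prod_congr rfl fun i hi => by rw [if_pos hi, sum_singleton, hf], prod_const_one, one_mul]
  exact prod_congr rfl fun i hi => by rw [if_neg (mem_compl.1 hi)]

lemma sum_filter_card_zeroSet_eq_sum_powersetCard (f : ι → R → M) (hf : ∀ i, f i 0 = 1)
    {z : ℕ} (hz : z ≤ Fintype.card ι) :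
    ∑ x ∈ univ.filter (fun x : ι → R => #(univ.filter (fun i => x i = 0)) = z),
        ∏ i, f i (x i) =
      ∑ U ∈ powersetCard (Fintype.card ι - z) univ, ∏ i ∈ U, ∑ a ∈ {0}ᶜ, f i a := by
  have hmaps : ∀ x ∈ univ.filter (fun x : ι → R => #(univ.filter (fun i => x i = 0)) = z),
      univ.filter (fun i => x i = 0) ∈ powersetCard z univ :=
    fun x hx => mem_powersetCard_univ.2 (mem_filter.1 hx).2
  rw [← sum_fiberwise_of_maps_to hmaps]
  calc _ = ∑ S ∈ powersetCard z univ, ∏ i ∈ Sᶜ, ∑ a ∈ {0}ᶜ, f i a := by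
        refine sum_congr rfl fun S hS => ?_
        rw [filter_filter, ← sum_filter_zeroSet_eq_prod f hf S]
        refine sum_congr (filter_congr fun x _ => ?_) fun _ _ => rfl
        exact and_iff_right_of_imp fun h => h ▸ mem_powersetCard_univ.1 hS
    _ = _ := by
        refine sum_nbij' compl compl (fun S hS => ?_) (fun U hU => ?_) (fun S _ => compl_compl S)
          (fun U _ => compl_compl U) fun _ _ => rfl
        · simp_all [card_compl]
        · simp_all [card_compl]; omega

end ZeroSet

theorem stmt_2_general (m n : ℕ) [NeZero m] (ζ : ℂ) (hζ : IsPrimitiveRoot ζ m)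
    (y : Fin n → ZMod m) (t : ℕ)
    (ht : t = (Finset.univ.filter (fun i => y i = 0)).card)
    (z : ℕ) (hz : z ≤ n) :
    ∑ x ∈ Finset.univ.filter
        (fun x : Fin n → ZMod m => (Finset.univ.filter (fun i => x i = 0)).card = z),
      ζ ^ (∑ i, y i * x i).val =
    ∑ ℓ ∈ Finset.range (n - z + 1),
      ((m : ℂ) - 1) ^ ℓ * (-1) ^ (n - z - ℓ) * (t.choose ℓ) * ((n - t).choose (n - z - ℓ)) := by
  set ψ := AddChar.zmodChar m hζ.pow_eq_one
  have hψ : ψ.IsPrimitive := AddChar.zmodChar_primitive_of_primitive_root m hζ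
  set T : Finset (Fin n) := univ.filter (fun i => y i = 0)
  have hc : ∀ i, ∑ a ∈ {0}ᶜ, ψ (y i * a) = if i ∈ T then (m : ℂ) - 1 else -1 := fun i => by
    simp [AddChar.sum_compl_zero_mulShift hψ, T]
  have hTc : #Tᶜ = n - t := by rw [card_compl, Fintype.card_fin, ht]
  calc _ = ∑ x ∈ univ.filter (fun x : Fin n → ZMod m => #(univ.filter (fun i => x i = 0)) = z),
        ∏ i, ψ (y i * x i) := sum_congr rfl fun x _ => AddChar.map_sum_eq_prod ψ univ _
    _ = _ := by
      rw [sum_filter_card_zeroSet_eq_sum_powersetCard (ι := Fin n) (R := ZMod m)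
        (fun i a => ψ (y i * a)) (fun i => by simp) (by simpa using hz)]
      simp_rw [hc, sum_powersetCard_prod_ite, Fintype.card_fin, hTc, ← ht]

theorem stmt_2 (m n : ℕ) [NeZero m] (hn : 0 < n) (ζ : ℂ) (hζ : IsPrimitiveRoot ζ m)
    (y : Fin n → ZMod m) (t : ℕ)
    (ht : t = (Finset.univ.filter (fun i => y i = 0)).card)
    (z : ℕ) (hz : z ≤ n) :
    ∑ x ∈ Finset.univ.filter
        (fun x : Fin n → ZMod m => (Finset.univ.filter (fun i => x i = 0)).card = z),
      ζ ^ (∑ i, y i * x i).val =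
    ∑ ℓ ∈ Finset.range (n - z + 1),
      ((m : ℂ) - 1) ^ ℓ * (-1) ^ (n - z - ℓ) * (t.choose ℓ) * ((n - t).choose (n - z - ℓ)) :=
  stmt_2_general m n ζ hζ y t ht z hz
end

section
/- Let m, n be positive integers, k ≤ n, ζ ∈ ℂ a primitive m-th root of unity, and y ∈ (ℤ/mℤ)^n. Then ∑_{x ∈ (ℤ/mℤ)^n} C(Z(x), k) · ζ^{y·x} = m^{n-k} · C(Z(y), n-k), where Z(v) is the number of zero coordinates of v. -/
/-!
Write `C(Z(x), k)` as the number of `k`-sets `S` on which `x` vanishes and exchange the sums.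
For fixed `S` the sum over `x` factors over the coordinates: a coordinate in `S` contributes `1`,
one outside `S` contributes the character sum `∑ₐ ψ(a yᵢ)`, which is `|R|` if `yᵢ = 0` and `0`
otherwise. So `S` contributes `|R|^(n-k)` exactly when `y` vanishes off `S`, and the complements
of these `S` are the `(n-k)`-subsets of the zero set of `y`.
-/

open Finset

namespace Finset

variable {α : Type*} [Fintype α] [DecidableEq α]

theorem choose_card_eq_card_filter_powersetCard_subset (s : Finset α) (k : ℕ) :
    (#s).choose k = #{S ∈ powersetCard k univ | S ⊆ s} := by
  rw [← card_powersetCard]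
  congr 1
  ext S
  simp [mem_powersetCard, and_comm]

theorem card_filter_powersetCard_compl_subset (t : Finset α) {k : ℕ}
    (hk : k ≤ Fintype.card α) :
    #{S ∈ powersetCard k univ | Sᶜ ⊆ t} = (#t).choose (Fintype.card α - k) := by
  rw [← card_powersetCard]
  refine card_nbij' (·ᶜ) (·ᶜ) ?_ ?_ (fun S _ => compl_compl S) (fun T _ => compl_compl T)
  · intro S hS
    simp_all [mem_powersetCard, card_compl]
  · intro T hT
    simp_all [mem_powersetCard, card_compl, Nat.sub_sub_self hk]

end Finset

namespace AddChar

theorem map_sum {A M ι : Type*} [AddCommMonoid A] [CommMonoid M] (ψ : AddChar A M)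
    (s : Finset ι) (f : ι → A) : ψ (∑ i ∈ s, f i) = ∏ i ∈ s, ψ (f i) :=
  map_prod ψ.toMonoidHom (fun i => Multiplicative.ofAdd (f i)) s

variable {R R' ι : Type*} [CommRing R] [Fintype R] [DecidableEq R] [CommRing R'] [IsDomain R']
  [Fintype ι] [DecidableEq ι] {ψ : AddChar R R'}

theorem sum_ite_forall_mem_eq_zero_mul_apply_sum (hψ : ψ.IsPrimitive) (S : Finset ι)
    (y : ι → R) :
    ∑ x : ι → R, (if ∀ i ∈ S, x i = 0 then 1 else 0) * ψ (∑ i, y i * x i) =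
      ∏ i ∈ Sᶜ, if y i = 0 then (Fintype.card R : R') else 0 := by
  have hterm : ∀ x : ι → R, (if ∀ i ∈ S, x i = 0 then 1 else 0) * ψ (∑ i, y i * x i) =
      ∏ i, if i ∈ S → x i = 0 then ψ (x i * y i) else 0 := by
    intro x
    rw [prod_ite_zero, map_sum]
    simp [mul_comm]
  have hcolumn : ∀ i, (∑ a : R, if i ∈ S → a = 0 then ψ (a * y i) else 0) =
      if i ∈ Sᶜ then (if y i = 0 then (Fintype.card R : R') else 0) else 1 := by
    intro i
    by_cases hi : i ∈ S
    · simp [hi]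
    · simp [hi, sum_mulShift _ hψ]
  rw [sum_congr rfl fun x _ => hterm x,
    ← Fintype.prod_sum fun i a => if i ∈ S → a = 0 then ψ (a * y i) else 0]
  simp_rw [hcolumn, prod_ite_mem, univ_inter]

theorem sum_choose_card_zeros_mul_apply_sum (hψ : ψ.IsPrimitive) {k : ℕ}
    (hk : k ≤ Fintype.card ι) (y : ι → R) :
    ∑ x : ι → R, ((#{i | x i = 0}).choose k : R') * ψ (∑ i, y i * x i) =
      (Fintype.card R : R') ^ (Fintype.card ι - k) *
        (#{i | y i = 0}).choose (Fintype.card ι - k) := by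
  have hchoose : ∀ x : ι → R, ((#{i | x i = 0}).choose k : R') =
      ∑ S ∈ powersetCard k univ, if ∀ i ∈ S, x i = 0 then 1 else 0 := by
    intro x
    rw [choose_card_eq_card_filter_powersetCard_subset, card_filter, Nat.cast_sum]
    simp [subset_iff]
  have hcompl : ∀ S ∈ powersetCard k (univ : Finset ι),
      ∏ i ∈ Sᶜ, (if y i = 0 then (Fintype.card R : R') else 0) =
        if Sᶜ ⊆ ({i | y i = 0} : Finset ι) then (Fintype.card R : R') ^ (Fintype.card ι - k)
        else 0 := by
    intro S hS
    rw [prod_ite_zero, prod_const, card_compl, (mem_powersetCard.1 hS).2]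
    simp [subset_iff]
  simp_rw [hchoose, sum_mul, sum_comm (s := univ),
    sum_ite_forall_mem_eq_zero_mul_apply_sum hψ]
  rw [sum_congr rfl hcompl, sum_ite, sum_const_zero, add_zero, sum_const, nsmul_eq_mul,
    card_filter_powersetCard_compl_subset _ hk, mul_comm]

end AddChar

theorem stmt_3_general (m n k : ℕ) [NeZero m] (hk : k ≤ n)
    (ζ : ℂ) (hζ : IsPrimitiveRoot ζ m) (y : Fin n → ZMod m) :
    ∑ x : Fin n → ZMod m,
      (((Finset.univ.filter (fun i => x i = 0)).card.choose k : ℂ)) * ζ ^ (∑ i, y i * x i).val =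
    (m : ℂ) ^ (n - k) * (((Finset.univ.filter (fun i => y i = 0)).card.choose (n - k) : ℂ)) := by
  have h := AddChar.sum_choose_card_zeros_mul_apply_sum
    (AddChar.zmodChar_primitive_of_primitive_root m hζ) (by simpa using hk) y
  simpa [AddChar.zmodChar_apply, ZMod.card] using h

theorem stmt_3 (m n k : ℕ) [NeZero m] (hn : 0 < n) (hk : k ≤ n)
    (ζ : ℂ) (hζ : IsPrimitiveRoot ζ m) (y : Fin n → ZMod m) :
    ∑ x : Fin n → ZMod m,
      (((Finset.univ.filter (fun i => x i = 0)).card.choose k : ℂ)) * ζ ^ (∑ i, y i * x i).val =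
    (m : ℂ) ^ (n - k) * (((Finset.univ.filter (fun i => y i = 0)).card.choose (n - k) : ℂ)) :=
  stmt_3_general m n k hk ζ hζ y
end

section
/- Let m, n be positive integers and 0 ≤ k ≤ n. Consider the m^n × m^n complex matrix A indexed by elements of (ℤ/mℤ)^n with entries A_{f,g} = C(Z(g - f), k), where Z counts zero coordinates. Then the rank of A equals ∑_{s=0}^{k} C(n, s) · (m-1)^s, and the dimension of its kernel equals ∑_{t=0}^{n-k-1} C(n, t) · (m-1)^{n-t}. -/
/-!
`A` is the convolution matrix `A f g = w (g - f)` of `w v = C(Z(v), k)` on `(ℤ/mℤ)^n`, so the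
characters `χ_c(f) = ∏ i, exp(2πi f_i c_i / m)` form an eigenbasis. Writing `C(Z(v), k)` as the
number of `k`-sets on which `v` vanishes, the eigenvalue at `c` is `m^(n-k)` times the number of
`k`-sets containing the support of `c`, which is nonzero iff `c` has Hamming weight at most `k`.
Counting such `c` gives the rank; the nullity is the rest of the binomial expansion of
`m^n = ((m - 1) + 1)^n`.
-/

open Finset Matrix

namespace Matrix

variable {G X R : Type*} [AddCommGroup G] [Fintype G] [CommRing R] [Fintype X] [DecidableEq X]

theorem of_sub_mul_of_addChar (w : G → R) (χ : X → AddChar G R) :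
    (of fun f g => w (g - f)) * of (fun f x => χ x f) =
      of (fun f x => χ x f) * diagonal fun x => ∑ v, w v * χ x v := by
  ext f x
  rw [mul_apply, mul_diagonal, of_apply, Finset.mul_sum,
    ← Equiv.sum_comp (Equiv.addLeft f)]
  refine Fintype.sum_congr _ _ fun v => ?_
  simp [AddChar.map_add_eq_mul, mul_left_comm]

theorem rank_eq_card_ne_zero_of_mul_eq_mul_diagonal {K : Type*} [Field K] [DecidableEq K]
    {A P : Matrix X X K} {d : X → K} (hP : IsUnit P.det) (h : A * P = P * diagonal d) :
    A.rank = Fintype.card {x // d x ≠ 0} := by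
  rw [← rank_mul_eq_left_of_isUnit_det P A hP, h, rank_mul_eq_right_of_isUnit_det _ _ hP,
    rank_diagonal]

end Matrix

theorem Finset.card_filter_powersetCard_forall {ι : Type*} [Fintype ι] (p : ι → Prop)
    [DecidablePred p] (k : ℕ) :
    #{S ∈ powersetCard k univ | ∀ i ∈ S, p i} = (#{i | p i}).choose k := by
  rw [← card_powersetCard]
  congr 1
  ext S
  simp [subset_iff, and_comm]

namespace ZMod

variable {m : ℕ} [NeZero m] {ι : Type*} [Fintype ι]

noncomputable def stdAddCharPi (c : ι → ZMod m) : AddChar (ι → ZMod m) ℂ where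
  toFun f := ∏ i, stdAddChar (f i * c i)
  map_zero_eq_one' := by simp
  map_add_eq_mul' f g := by simp [add_mul, AddChar.map_add_eq_mul, prod_mul_distrib]

theorem stdAddCharPi_apply (c f : ι → ZMod m) :
    stdAddCharPi c f = ∏ i, stdAddChar (f i * c i) := rfl

theorem stdAddCharPi_comm (c f : ι → ZMod m) : stdAddCharPi c f = stdAddCharPi f c := by
  simp only [stdAddCharPi_apply, mul_comm]

theorem sum_stdAddChar_mul (b : ZMod m) :
    ∑ x : ZMod m, stdAddChar (x * b) = if b = 0 then (m : ℂ) else 0 := by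
  rw [AddChar.sum_mulShift b (isPrimitive_stdAddChar m), ZMod.card]
  split_ifs <;> simp

theorem sum_stdAddCharPi_of_forall_mem_eq_zero [DecidableEq ι] (S : Finset ι) (c : ι → ZMod m) :
    ∑ v with ∀ i ∈ S, v i = 0, stdAddCharPi c v =
      if ∀ i ∉ S, c i = 0 then (m : ℂ) ^ #Sᶜ else 0 := by
  have hcyl : ({v | ∀ i ∈ S, v i = 0} : Finset (ι → ZMod m)) =
      Fintype.piFinset fun i => if i ∈ S then {0} else univ := by
    ext v
    simp only [mem_filter, mem_univ, true_and, Fintype.mem_piFinset]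
    refine forall_congr' fun i => ?_
    split_ifs <;> simp [*]
  simp only [hcyl, stdAddCharPi_apply]
  rw [← prod_univ_sum (fun i => if i ∈ S then {0} else univ) fun i x => stdAddChar (x * c i)]
  have hfactor (i : ι) : ∑ x ∈ (if i ∈ S then {0} else univ), stdAddChar (x * c i) =
      if i ∈ S then 1 else if c i = 0 then (m : ℂ) else 0 := by
    split_ifs <;> simp_all [sum_stdAddChar_mul]
  simp only [hfactor]
  split_ifs with hc
  · calc _ = ∏ i, if i ∈ Sᶜ then (m : ℂ) else 1 :=
          Fintype.prod_congr _ _ fun i => by by_cases hi : i ∈ S <;> simp [hi, hc]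
      _ = _ := by rw [prod_ite_mem, univ_inter, prod_const]
  · push Not at hc
    obtain ⟨i, hiS, hci⟩ := hc
    exact prod_eq_zero (mem_univ i) (by simp [hiS, hci])

theorem sum_stdAddCharPi [DecidableEq ι] (c : ι → ZMod m) :
    ∑ v, stdAddCharPi c v = if c = 0 then (m : ℂ) ^ Fintype.card ι else 0 := by
  simpa [funext_iff] using sum_stdAddCharPi_of_forall_mem_eq_zero ∅ c

variable (m ι) in
noncomputable def dftMatrix : Matrix (ι → ZMod m) (ι → ZMod m) ℂ :=
  of fun f c => stdAddCharPi c f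

theorem isUnit_det_dftMatrix [DecidableEq ι] : IsUnit (dftMatrix m ι).det := by
  refine isUnit_det_of_right_inverse (B := ((m : ℂ) ^ Fintype.card ι)⁻¹ •
    of fun c f => stdAddCharPi c (-f)) ?_
  have hm : (m : ℂ) ^ Fintype.card ι ≠ 0 := pow_ne_zero _ (Nat.cast_ne_zero.mpr (NeZero.ne m))
  ext f f'
  have hentry : ∀ c, stdAddCharPi c f * stdAddCharPi c (-f') = stdAddCharPi (f - f') c := by
    intro c
    rw [← AddChar.map_add_eq_mul, stdAddCharPi_comm, sub_eq_add_neg]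
  rw [Matrix.mul_smul, Matrix.smul_apply, mul_apply]
  simp only [dftMatrix, of_apply, hentry, sum_stdAddCharPi, sub_eq_zero, one_apply]
  split_ifs <;> simp [hm]

theorem sum_choose_card_zeros_mul_stdAddCharPi [DecidableEq ι] (k : ℕ) (c : ι → ZMod m) :
    ∑ v, ((#{i | v i = 0}).choose k : ℂ) * stdAddCharPi c v =
      (m : ℂ) ^ (Fintype.card ι - k) *
        #{S ∈ powersetCard k univ | ({i | c i ≠ 0} : Finset ι) ⊆ S} := by
  calc _ = ∑ v, ∑ S ∈ powersetCard k univ, if ∀ i ∈ S, v i = 0 then stdAddCharPi c v else 0 := by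
        refine sum_congr rfl fun v _ => ?_
        rw [← card_filter_powersetCard_forall, card_filter, Nat.cast_sum, sum_mul]
        simp only [Nat.cast_ite, Nat.cast_one, Nat.cast_zero, ite_mul, one_mul, zero_mul]
    _ = ∑ S ∈ powersetCard k univ, if ({i | c i ≠ 0} : Finset ι) ⊆ S
          then (m : ℂ) ^ (Fintype.card ι - k) else 0 := by
        rw [sum_comm]
        refine sum_congr rfl fun S hS => ?_
        rw [← sum_filter, sum_stdAddCharPi_of_forall_mem_eq_zero, card_compl,
          mem_powersetCard_univ.mp hS]
        congr 1
        simp [subset_iff, not_imp_comm]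
    _ = _ := by rw [← sum_filter, sum_const, nsmul_eq_mul, mul_comm]

theorem sum_choose_card_zeros_mul_stdAddCharPi_ne_zero_iff [DecidableEq ι] {k : ℕ}
    (hk : k ≤ Fintype.card ι) (c : ι → ZMod m) :
    ∑ v, ((#{i | v i = 0}).choose k : ℂ) * stdAddCharPi c v ≠ 0 ↔ hammingNorm c ≤ k := by
  rw [sum_choose_card_zeros_mul_stdAddCharPi, mul_ne_zero_iff,
    and_iff_right (pow_ne_zero _ (Nat.cast_ne_zero.mpr (NeZero.ne m))), Nat.cast_ne_zero,
    ← pos_iff_ne_zero, card_pos]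
  constructor
  · rintro ⟨S, hS⟩
    rw [mem_filter, mem_powersetCard_univ] at hS
    exact hS.1 ▸ card_le_card hS.2
  · intro h
    obtain ⟨S, hcS, -, hS⟩ := exists_subsuperset_card_eq (subset_univ _) h (by simpa using hk)
    exact ⟨S, mem_filter.mpr ⟨mem_powersetCard_univ.mpr hS, hcS⟩⟩

end ZMod

section HammingWeight

variable {ι α : Type*} [Fintype ι] [DecidableEq ι] [Fintype α] [DecidableEq α] [Zero α]

theorem card_filter_support_eq (S : Finset ι) :
    #{c : ι → α | ({i | c i ≠ 0} : Finset ι) = S} = (Fintype.card α - 1) ^ #S := by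
  have hpi : ({c | ({i | c i ≠ 0} : Finset ι) = S} : Finset (ι → α)) =
      Fintype.piFinset fun i => if i ∈ S then {0}ᶜ else {0} := by
    ext c
    simp only [mem_filter, mem_univ, true_and, Fintype.mem_piFinset, Finset.ext_iff]
    refine forall_congr' fun i => ?_
    split_ifs <;> simp [*]
  rw [hpi, Fintype.card_piFinset]
  calc _ = ∏ i, if i ∈ S then Fintype.card α - 1 else 1 :=
        Fintype.prod_congr _ _ fun i => by split_ifs <;> simp [card_compl]
    _ = _ := by rw [prod_ite_mem, univ_inter, prod_const]

theorem card_filter_hammingNorm_eq (s : ℕ) :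
    #{c : ι → α | hammingNorm c = s} = (Fintype.card ι).choose s * (Fintype.card α - 1) ^ s := by
  rw [card_eq_sum_card_fiberwise (f := fun c : ι → α => ({i | c i ≠ 0} : Finset ι))
    (t := powersetCard s univ) fun c hc => by simpa [hammingNorm] using hc]
  calc _ = ∑ S ∈ powersetCard s univ, (Fintype.card α - 1) ^ s := by
        refine sum_congr rfl fun S hS => ?_
        rw [mem_powersetCard_univ] at hS
        rw [← hS, ← card_filter_support_eq, filter_filter]
        congr 1
        ext c
        simp only [mem_filter, mem_univ, true_and, hammingNorm, and_iff_right_iff_imp]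
        rintro rfl
        rfl
    _ = _ := by rw [sum_const, card_powersetCard, card_univ, smul_eq_mul]

theorem card_filter_hammingNorm_le (k : ℕ) :
    #{c : ι → α | hammingNorm c ≤ k} =
      ∑ s ∈ range (k + 1), (Fintype.card ι).choose s * (Fintype.card α - 1) ^ s := by
  rw [card_eq_sum_card_fiberwise (f := hammingNorm) (t := range (k + 1))
    fun c hc => by simpa [Nat.lt_succ_iff] using hc]
  refine sum_congr rfl fun s hs => ?_
  rw [← card_filter_hammingNorm_eq, filter_filter]
  congr 1
  ext c
  simp only [mem_filter, mem_univ, true_and, and_iff_right_iff_imp]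
  rintro rfl
  simpa [Nat.lt_succ_iff] using hs

end HammingWeight

theorem Nat.add_one_pow_eq_sum_range_add_sum_range {x n k : ℕ} (hk : k ≤ n) :
    (x + 1) ^ n = ∑ s ∈ range (k + 1), n.choose s * x ^ s +
      ∑ t ∈ range (n - k), n.choose t * x ^ (n - t) := by
  have hsplit : n + 1 = (k + 1) + (n - k) := by omega
  rw [add_pow]
  simp only [one_pow, mul_one, Nat.cast_id]
  rw [hsplit, sum_range_add, ← sum_range_reflect _ (n - k)]
  congr 1
  · exact sum_congr rfl fun s _ => mul_comm _ _
  · refine sum_congr rfl fun j hj => ?_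
    have hj' : k + 1 + (n - k - 1 - j) = n - j := by rw [mem_range] at hj; omega
    rw [hj', Nat.choose_symm (by omega), mul_comm]

theorem stmt_6_general (m n k : ℕ) [NeZero m] (hk : k ≤ n)
    (A : Matrix (Fin n → ZMod m) (Fin n → ZMod m) ℂ)
    (hA : ∀ f g, A f g =
      ((Finset.univ.filter (fun i => (g - f) i = 0)).card.choose k : ℂ)) :
    A.rank = ∑ s ∈ Finset.range (k + 1), n.choose s * (m - 1) ^ s ∧
    Module.finrank ℂ (LinearMap.ker A.mulVecLin) =
      ∑ t ∈ Finset.range (n - k), n.choose t * (m - 1) ^ (n - t) := by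
  have hdiag : A * ZMod.dftMatrix m (Fin n) = ZMod.dftMatrix m (Fin n) * diagonal fun c =>
      ∑ v, ((#{i | v i = 0}).choose k : ℂ) * ZMod.stdAddCharPi c v := by
    rw [show A = of fun f g => ((#{i | (g - f) i = 0}).choose k : ℂ) from ext hA]
    exact of_sub_mul_of_addChar (fun v : Fin n → ZMod m => ((#{i | v i = 0}).choose k : ℂ))
      (ZMod.stdAddCharPi (m := m) (ι := Fin n))
  have hrank : A.rank = ∑ s ∈ range (k + 1), n.choose s * (m - 1) ^ s := by
    rw [rank_eq_card_ne_zero_of_mul_eq_mul_diagonal ZMod.isUnit_det_dftMatrix hdiag,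
      Fintype.card_subtype]
    simp_rw [ZMod.sum_choose_card_zeros_mul_stdAddCharPi_ne_zero_iff
      (show k ≤ Fintype.card (Fin n) by simpa using hk)]
    simpa using card_filter_hammingNorm_le (ι := Fin n) (α := ZMod m) k
  have hnullity : A.rank + Module.finrank ℂ (LinearMap.ker A.mulVecLin) = (m - 1 + 1) ^ n := by
    rw [rank, LinearMap.finrank_range_add_finrank_ker, Module.finrank_fintype_fun_eq_card,
      Fintype.card_fun, ZMod.card, Fintype.card_fin, Nat.sub_add_cancel NeZero.one_le]
  refine ⟨hrank, ?_⟩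
  rw [Nat.add_one_pow_eq_sum_range_add_sum_range hk, hrank] at hnullity
  omega

theorem stmt_6 (m n k : ℕ) [NeZero m] (hn : 0 < n) (hk : k ≤ n)
    (A : Matrix (Fin n → ZMod m) (Fin n → ZMod m) ℂ)
    (hA : ∀ f g, A f g =
      ((Finset.univ.filter (fun i => (g - f) i = 0)).card.choose k : ℂ)) :
    A.rank = ∑ s ∈ Finset.range (k + 1), n.choose s * (m - 1) ^ s ∧
    Module.finrank ℂ (LinearMap.ker A.mulVecLin) =
      ∑ t ∈ Finset.range (n - k), n.choose t * (m - 1) ^ (n - t) :=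
  stmt_6_general m n k hk A hA
end

section
/- Let 0 ≤ k ≤ m. For every class function χ: S_m → ℂ and every f with k ≤ f ≤ m, we have C(f, k) · ∑_{σ ∈ S_m, F(σ) = f} χ(σ) = C(m, k) · ∑_{σ ∈ S_{m-k}, F(σ) = f} χ(σ), where S_{m-k} is the subgroup of S_m fixing the points {m-k+1, …, m}, and in the right-hand sum F(σ) counts all fixed points of σ as an element of S_m (which equals k plus its fixed points in {1,…,m-k}). -/
/-!
Double count the pairs `(T, σ)` with `#Fix σ = f` and `T` a `k`-subset of `Fix σ`, weighted by
`χ σ`. Counting by `σ` gives `C(f, k) • ∑_{#Fix σ = f} χ σ`. Counting by `T`, the inner sum over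
the `σ` fixing `T` pointwise only depends on `#T`: the symmetric group acts transitively on
`k`-subsets, conjugating by `τ` maps `Fix σ` to `τ • Fix σ`, and `χ` is a class function. So it
equals `C(m, k)` times the inner sum for `T = {m - k, …, m - 1}`.
-/

open Finset Equiv
open scoped Pointwise

theorem Finset.sum_powersetCard_sum_filter_subset {ι α M : Type*} [Fintype α] [DecidableEq α]
    [AddCommMonoid M] (k : ℕ) (s : Finset ι) (g : ι → Finset α)
    (χ : ι → M) :
    ∑ T ∈ powersetCard k (univ : Finset α), ∑ σ ∈ s with T ⊆ g σ, χ σ =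
      ∑ σ ∈ s, (#(g σ)).choose k • χ σ := by
  simp_rw [sum_filter]
  rw [sum_comm]
  refine sum_congr rfl fun σ _ => ?_
  rw [← sum_filter, sum_const, ← card_powersetCard]
  congr 2
  ext T
  simp [mem_powersetCard, and_comm]

namespace Equiv.Perm

variable {α M : Type*} [DecidableEq α]

theorem filter_conj_apply_eq_self [Fintype α] (σ τ : Perm α) :
    ({i | (τ * σ * τ⁻¹) i = i} : Finset α) = τ • ({i | σ i = i} : Finset α) := by
  ext i
  rw [Finset.mem_smul_finset]
  simp [← Equiv.eq_symm_apply]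

theorem exists_smul_finset_eq {s t : Finset α} (h : #s = #t) : ∃ τ : Perm α, τ • s = t := by
  have := Set.powersetCard.isPretransitive (α := α) (n := #t)
  obtain ⟨τ, hτ⟩ := MulAction.exists_smul_eq (Perm α)
    (⟨s, h⟩ : Set.powersetCard α #t) ⟨t, rfl⟩
  exact ⟨τ, congrArg Subtype.val hτ⟩

variable [Fintype α] [AddCommMonoid M]

theorem sum_filter_smul_subset_fixed (χ : Perm α → M) (hχ : ∀ σ τ, χ (τ * σ * τ⁻¹) = χ σ)
    (f : ℕ) (T : Finset α) (τ : Perm α) :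
    ∑ σ with τ • T ⊆ ({i | σ i = i} : Finset α) ∧ #{i | σ i = i} = f, χ σ =
      ∑ σ with T ⊆ ({i | σ i = i} : Finset α) ∧ #{i | σ i = i} = f, χ σ := by
  symm
  refine sum_equiv (MulAut.conj τ).toEquiv (fun σ => ?_) (fun σ _ => (hχ σ τ).symm)
  simp only [mem_filter, mem_univ, true_and, MulEquiv.toEquiv_eq_coe, MulEquiv.coe_toEquiv,
    MulAut.conj_apply, filter_conj_apply_eq_self, smul_finset_subset_smul_finset_iff,
    card_smul_finset]

theorem sum_filter_subset_fixed_eq_of_card_eq (χ : Perm α → M)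
    (hχ : ∀ σ τ, χ (τ * σ * τ⁻¹) = χ σ) (f : ℕ) {S T : Finset α} (h : #S = #T) :
    ∑ σ with S ⊆ ({i | σ i = i} : Finset α) ∧ #{i | σ i = i} = f, χ σ =
      ∑ σ with T ⊆ ({i | σ i = i} : Finset α) ∧ #{i | σ i = i} = f, χ σ := by
  obtain ⟨τ, rfl⟩ := exists_smul_finset_eq h
  exact (sum_filter_smul_subset_fixed χ hχ f S τ).symm

theorem choose_nsmul_sum_card_fixed_eq (χ : Perm α → M) (hχ : ∀ σ τ, χ (τ * σ * τ⁻¹) = χ σ)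
    (f : ℕ) {k : ℕ} {T : Finset α} (hT : #T = k) :
    f.choose k • ∑ σ with #{i | σ i = i} = f, χ σ =
      (Fintype.card α).choose k •
        ∑ σ with T ⊆ ({i | σ i = i} : Finset α) ∧ #{i | σ i = i} = f, χ σ := by
  calc f.choose k • ∑ σ with #{i | σ i = i} = f, χ σ
      = ∑ σ with #{i | σ i = i} = f, (#{i | σ i = i}).choose k • χ σ := by
        rw [smul_sum]
        refine sum_congr rfl fun σ hσ => ?_
        rw [(mem_filter.mp hσ).2]
    _ = ∑ S ∈ powersetCard k univ, ∑ σ ∈ {σ | #{i | σ i = i} = f} with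
          S ⊆ ({i | σ i = i} : Finset α), χ σ :=
        (sum_powersetCard_sum_filter_subset k _ _ χ).symm
    _ = ∑ S ∈ powersetCard k univ,
          ∑ σ with T ⊆ ({i | σ i = i} : Finset α) ∧ #{i | σ i = i} = f, χ σ := by
        refine sum_congr rfl fun S hS => ?_
        rw [filter_filter]
        simp_rw [and_comm (a := #_ = f)]
        exact sum_filter_subset_fixed_eq_of_card_eq χ hχ f
          ((mem_powersetCard.mp hS).2.trans hT.symm)
    _ = (Fintype.card α).choose k •
          ∑ σ with T ⊆ ({i | σ i = i} : Finset α) ∧ #{i | σ i = i} = f, χ σ := by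
        rw [sum_const, card_powersetCard, card_univ]

end Equiv.Perm

theorem Fin.card_filter_sub_le_val {m k : ℕ} (hk : k ≤ m) :
    #{i : Fin m | m - k ≤ (i : ℕ)} = k := by
  have : ({i : Fin m | m - k ≤ (i : ℕ)} : Finset (Fin m)) =
      ({i | (i : ℕ) < m - k} : Finset (Fin m))ᶜ := by
    ext i; simp
  rw [this, card_compl, Fintype.card_fin, Fin.card_filter_val_lt]
  omega

theorem stmt_10 (m k f : ℕ) (hk : k ≤ f) (hf : f ≤ m)
    (χ : Equiv.Perm (Fin m) → ℂ)
    (hχ : ∀ σ τ : Equiv.Perm (Fin m), χ (τ * σ * τ⁻¹) = χ σ) :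
    (f.choose k : ℂ) *
      ∑ σ ∈ Finset.univ.filter
          (fun σ : Equiv.Perm (Fin m) =>
            (Finset.univ.filter (fun i => σ i = i)).card = f), χ σ =
    (m.choose k : ℂ) *
      ∑ σ ∈ Finset.univ.filter
          (fun σ : Equiv.Perm (Fin m) =>
            (∀ i : Fin m, m - k ≤ (i : ℕ) → σ i = i) ∧
            (Finset.univ.filter (fun i => σ i = i)).card = f), χ σ := by
  have h := Perm.choose_nsmul_sum_card_fixed_eq χ hχ f (Fin.card_filter_sub_le_val (hk.trans hf))
  rw [Fintype.card_fin, nsmul_eq_mul, nsmul_eq_mul] at h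
  convert h using 5
  simp [subset_iff]
end

section
/- Let m be a positive integer and 0 ≤ k ≤ m. For every irreducible complex character χ of S_m, the quantity λ_χ = (1/χ(1)) · ∑_{σ ∈ S_m} C(F(σ), k) · χ(σ) is a non-negative rational number (in fact a non-negative integer), where F(σ) is the number of fixed points of σ. -/
/-!
Since `σ ↦ C(F(σ), k)` is a class function, `T = ∑ σ, C(F(σ), k) • ρ σ` commutes with every
`ρ τ`, so by Schur's lemma `T = c • 1` and `λ = c`. As `T` is the image of an element of the
integral group ring, `c` is an algebraic integer. On the other hand `k! * C(F(σ), k)` counts the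
embeddings `Fin k ↪ Fin m` fixed by `σ`, so exchanging sums gives
`k! * d * c = ∑ f, ∑ σ ∈ Stab f, tr (ρ σ)`, and each inner sum is `|Stab f|` times the trace of
an idempotent, i.e. a natural number. A non-negative rational algebraic integer is a natural
number.
-/

open Finset

theorem Matrix.trace_eq_finrank_range_of_isIdempotentElem {K n : Type*} [Field K] [Fintype n]
    [DecidableEq n] {P : Matrix n n K} (hP : IsIdempotentElem P) :
    P.trace = Module.finrank K (LinearMap.range P.toLin') := by
  rw [← Matrix.trace_toLin'_eq]
  exact (LinearMap.IsIdempotentElem.isProj_range _ (hP.map Matrix.toLinAlgEquiv')).trace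

theorem Matrix.exists_eq_smul_one_of_forall_commute {ι n : Type*} [Fintype n] [DecidableEq n]
    [Nonempty n] (ρ : ι → Matrix n n ℂ)
    (hirr : ∀ U : Submodule ℂ (n → ℂ), (∀ i, U.map (ρ i).mulVecLin ≤ U) → U = ⊥ ∨ U = ⊤)
    {T : Matrix n n ℂ} (hT : ∀ i, Commute (ρ i) T) : ∃ c : ℂ, T = c • 1 := by
  obtain ⟨c, hc⟩ := Module.End.exists_eigenvalue T.mulVecLin
  obtain ⟨v, hv⟩ := hc.exists_hasEigenvector
  refine ⟨c, sub_eq_zero.mp ?_⟩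
  set U := LinearMap.ker (T - c • 1).mulVecLin
  have hU : ∀ i, U.map (ρ i).mulVecLin ≤ U := by
    rintro i _ ⟨x, hx, rfl⟩
    simp only [U, SetLike.mem_coe, LinearMap.mem_ker, Matrix.mulVecLin_apply] at hx ⊢
    rw [Matrix.mulVec_mulVec, ← ((hT i).sub_right ((Commute.one_right _).smul_right c)).eq,
      ← Matrix.mulVec_mulVec, hx, Matrix.mulVec_zero]
  have hvU : v ∈ U := by simp [U, hv.apply_eq_smul]
  have htop := (hirr U hU).resolve_left fun h => hv.2 (by simpa [h] using hvU)
  rw [LinearMap.ker_eq_top] at htop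
  exact Matrix.toLin'.injective (by rw [Matrix.toLin'_apply', htop, map_zero])

namespace Equiv.Perm

variable {α : Type*} [Fintype α] [DecidableEq α]

theorem card_fixedPoints_conj (σ τ : Perm α) :
    #{x | (τ * σ * τ⁻¹) x = x} = #{x | σ x = x} := by
  have key (π : Perm α) : #{x | π x = x} = Fintype.card α - #π.support := by
    rw [← card_compl]
    congr 1
    ext
    simp [Perm.mem_support]
  rw [key, key, card_support_conj]

theorem card_filter_smul_embedding_eq (k : ℕ) (σ : Perm α) :
    #{f : Fin k ↪ α | σ • f = f} = k.factorial * (#{x | σ x = x}).choose k := by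
  rw [← Fintype.card_subtype]
  have e : {f : Fin k ↪ α // σ • f = f} ≃ (Fin k ↪ {x | σ x = x}) :=
    (Equiv.subtypeEquivRight fun f => by
      simp [DFunLike.ext_iff, Function.Embedding.smul_apply]).trans
      (Equiv.codRestrict (Fin k) {x | σ x = x})
  rw [Fintype.card_congr e, Fintype.card_embedding_eq, Fintype.card_fin,
    Nat.descFactorial_eq_factorial_mul_choose]
  simp [Fintype.card_subtype]

end Equiv.Perm

section GroupSums

variable {G : Type*} [Group G]

theorem exists_trace_sum_subgroup_eq_natCast {K n : Type*} [Field K] [CharZero K] [Fintype n]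
    [DecidableEq n] (ρ : G →* Matrix n n K) (H : Subgroup G) [Fintype H] :
    ∃ r : ℕ, (∑ h : H, ρ h).trace = r := by
  set S := ∑ h : H, ρ h
  have hS : ∀ h : H, ρ h * S = S := fun h => by
    rw [Finset.mul_sum]
    exact Fintype.sum_equiv (Equiv.mulLeft h) _ _ fun g => by simp
  have hSS : S * S = (Fintype.card H : K) • S := by
    rw [Finset.sum_mul, Finset.sum_congr rfl fun h _ => hS h, Finset.sum_const,
      Finset.card_univ, Nat.cast_smul_eq_nsmul]
  have hH : (Fintype.card H : K) ≠ 0 := Nat.cast_ne_zero.mpr Fintype.card_ne_zero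
  have hP : IsIdempotentElem ((Fintype.card H : K)⁻¹ • S) := by
    rw [IsIdempotentElem, smul_mul_smul_comm, hSS, smul_smul, inv_mul_cancel_right₀ hH]
  refine ⟨Fintype.card H *
    Module.finrank K (LinearMap.range ((Fintype.card H : K)⁻¹ • S).toLin'), ?_⟩
  rw [Nat.cast_mul, ← Matrix.trace_eq_finrank_range_of_isIdempotentElem hP, Matrix.trace_smul,
    smul_eq_mul, mul_inv_cancel_left₀ hH]

variable [Fintype G]

theorem exists_sum_card_fixedBy_mul_trace_eq_natCast {K n X : Type*} [Field K] [CharZero K]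
    [Fintype n] [DecidableEq n] [MulAction G X] [Fintype X] [DecidableEq X]
    (ρ : G →* Matrix n n K) :
    ∃ r : ℕ, ∑ g, (#{x : X | g • x = x} : K) * (ρ g).trace = r := by
  choose r hr using fun x : X =>
    exists_trace_sum_subgroup_eq_natCast ρ (MulAction.stabilizer G x)
  refine ⟨∑ x, r x, ?_⟩
  calc ∑ g, (#{x : X | g • x = x} : K) * (ρ g).trace
      = ∑ g, ∑ x ∈ {x : X | g • x = x}, (ρ g).trace := by simp only [sum_const, nsmul_eq_mul]
    _ = ∑ x, ∑ g ∈ {g | g • x = x}, (ρ g).trace := Finset.sum_comm' (by simp)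
    _ = ∑ x, (r x : K) := Finset.sum_congr rfl fun x _ => by
        rw [← hr, Matrix.trace_sum,
          Finset.sum_subtype _ (p := (· ∈ MulAction.stabilizer G x)) (by simp)]
    _ = _ := by push_cast; rfl

theorem commute_sum_nsmul_of_conj_invariant {A : Type*} [Semiring A] (ρ : G →* A) {a : G → ℕ}
    (ha : ∀ g h, a (h * g * h⁻¹) = a g) (h : G) : Commute (ρ h) (∑ g, a g • ρ g) := by
  rw [Commute, SemiconjBy, Finset.mul_sum, Finset.sum_mul]
  refine Fintype.sum_equiv (MulAut.conj h).toEquiv _ _ fun g => ?_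
  simp only [MulEquiv.toEquiv_eq_coe, MulEquiv.coe_toEquiv, MulAut.conj_apply, ha,
    smul_mul_assoc, mul_smul_comm, ← map_mul, inv_mul_cancel_right]

theorem MonoidHom.isIntegral_sum_zsmul {A : Type*} [Ring A] (ρ : G →* A) (a : G → ℤ) :
    IsIntegral ℤ (∑ g, a g • ρ g) := by
  have := (IsIntegral.of_finite ℤ (∑ g, MonoidAlgebra.single g (a g))).map
    (MonoidAlgebra.lift ℤ A G ρ)
  simpa [MonoidAlgebra.lift_single] using this

end GroupSums

theorem exists_natCast_eq_of_isIntegral {K : Type*} [Field K] [CharZero K] {c : K}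
    (hc : IsIntegral ℤ c) {q r : ℕ} (hq : q ≠ 0) (h : q * c = r) : ∃ N : ℕ, c = N := by
  have hcq : c = algebraMap ℚ K (r / q) := by
    rw [map_div₀, map_natCast, map_natCast, eq_div_iff (Nat.cast_ne_zero.mpr hq), mul_comm, h]
  rw [hcq, isIntegral_algebraMap_iff (algebraMap ℚ K).injective,
    IsIntegrallyClosed.isIntegral_iff] at hc
  obtain ⟨z, hz⟩ := hc
  rw [algebraMap_int_eq, eq_intCast] at hz
  have hz0 : (0 : ℚ) ≤ z := hz ▸ by positivity
  lift z to ℕ using by exact_mod_cast hz0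
  exact ⟨z, by rw [hcq, ← hz]; simp⟩

theorem stmt_17_general (m k : ℕ)
    (d : ℕ) (hd : 0 < d)
    (ρ : Equiv.Perm (Fin m) →* Matrix (Fin d) (Fin d) ℂ)
    (hirr : ∀ U : Submodule ℂ (Fin d → ℂ),
      (∀ σ : Equiv.Perm (Fin m), U.map (Matrix.mulVecLin (ρ σ)) ≤ U) → U = ⊥ ∨ U = ⊤) :
    ∃ N : ℕ,
      (1 / (ρ 1).trace) *
        ∑ σ : Equiv.Perm (Fin m),
          (((Finset.univ.filter (fun i => σ i = i)).card.choose k : ℂ)) * (ρ σ).trace =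
      (N : ℂ) := by
  have : Nonempty (Fin d) := Fin.pos_iff_nonempty.mp hd
  set F : Equiv.Perm (Fin m) → ℕ := fun σ => (#{i | σ i = i}).choose k
  obtain ⟨c, hc⟩ := Matrix.exists_eq_smul_one_of_forall_commute ρ hirr
    (commute_sum_nsmul_of_conj_invariant ρ (a := F) fun σ τ => by
      simp only [F, Equiv.Perm.card_fixedPoints_conj])
  have hsum : ∑ σ, (F σ : ℂ) * (ρ σ).trace = c * d := by
    have := congrArg Matrix.trace hc
    simp only [Matrix.trace_sum, Matrix.trace_smul, Matrix.trace_one, Fintype.card_fin,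
      smul_eq_mul] at this
    simpa only [nsmul_eq_mul] using this
  have hint : IsIntegral ℤ c := by
    have := ρ.isIntegral_sum_zsmul fun σ => F σ
    simp only [natCast_zsmul, hc, ← Algebra.algebraMap_eq_smul_one] at this
    exact (isIntegral_algebraMap_iff (algebraMap ℂ _).injective).mp this
  obtain ⟨R, hR⟩ := exists_sum_card_fixedBy_mul_trace_eq_natCast (X := Fin k ↪ Fin m) ρ
  have hRc : ((k.factorial * d : ℕ) : ℂ) * c = R := by
    rw [← hR, Nat.cast_mul, mul_assoc, mul_comm (d : ℂ), ← hsum, Finset.mul_sum]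
    refine Finset.sum_congr rfl fun σ _ => ?_
    rw [Equiv.Perm.card_filter_smul_embedding_eq]
    push_cast
    ring
  obtain ⟨N, hN⟩ := exists_natCast_eq_of_isIntegral hint (by positivity) hRc
  have hd' : (d : ℂ) ≠ 0 := Nat.cast_ne_zero.mpr hd.ne'
  refine ⟨N, ?_⟩
  rw [map_one, Matrix.trace_one, Fintype.card_fin, hsum, ← hN]
  field_simp

theorem stmt_17 (m k : ℕ) (hm : 0 < m) (hk : k ≤ m)
    (d : ℕ) (hd : 0 < d)
    (ρ : Equiv.Perm (Fin m) →* Matrix (Fin d) (Fin d) ℂ)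
    (hirr : ∀ U : Submodule ℂ (Fin d → ℂ),
      (∀ σ : Equiv.Perm (Fin m), U.map (Matrix.mulVecLin (ρ σ)) ≤ U) → U = ⊥ ∨ U = ⊤) :
    ∃ N : ℕ,
      (1 / (ρ 1).trace) *
        ∑ σ : Equiv.Perm (Fin m),
          (((Finset.univ.filter (fun i => σ i = i)).card.choose k : ℂ)) * (ρ σ).trace =
      (N : ℂ) :=
  stmt_17_general m k d hd ρ hirr
end

section
/- Let G = ℤ/4ℤ and ω: G → ℕ the weight function with ω(0) = 4, ω(1) = ω(3) = 7, ω(2) = 9. Let A_k be the 4 × 4 matrix with entries (A_k)_{g,h} = C(ω(h - g), k). Then A_1 is non-singular while A_2 is singular; in particular the kernel of A_2 is not contained in the kernel of A_1. -/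
/-!
Both matrices are transposed circulants over `ℤ/4ℤ`, so the character `g ↦ (-1)^g` is a common
eigenvector, with eigenvalue the alternating sum `∑ (-1)^g C(ω g, k)` of the first row. This
alternating sum is `4 - 7 + 9 - 7 = -1` for `k = 1` and `6 - 21 + 36 - 21 = 0` for `k = 2`. The
determinant of a `4 × 4` circulant factors through its eigenvalues, which gives
`det A₁ = 27 · (-1) · 25` and `det A₂ = 0`.
-/

open Matrix

def parityChar (n : ℕ) (R : Type*) [Ring R] (g : ZMod n) : R := (-1) ^ g.val

section Ring

variable {R : Type*} [Ring R]

theorem parityChar_ne_zero [Nontrivial R] (n : ℕ) : parityChar n R ≠ 0 :=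
  Function.ne_iff.mpr ⟨0, by simp [parityChar]⟩

theorem parityChar_add {n : ℕ} [NeZero n] (hn : Even n) (a b : ZMod n) :
    parityChar n R (a + b) = parityChar n R a * parityChar n R b := by
  rw [parityChar, parityChar, parityChar, ← pow_add, neg_one_pow_eq_pow_mod_two, ZMod.val_add,
    Nat.mod_mod_of_dvd _ (even_iff_two_dvd.mp hn), ← neg_one_pow_eq_pow_mod_two]

end Ring

variable {R : Type*} [CommRing R]

theorem vecMul_circulant_parityChar {n : ℕ} [NeZero n] (hn : Even n) (v : ZMod n → R) :
    parityChar n R ᵥ* circulant v = (parityChar n R ⬝ᵥ v) • parityChar n R := by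
  ext j
  simp only [vecMul, dotProduct, circulant_apply, Pi.smul_apply, smul_eq_mul, Finset.sum_mul]
  refine Fintype.sum_equiv (Equiv.subRight j) _ _ fun i => ?_
  rw [Equiv.subRight_apply, mul_right_comm, ← parityChar_add hn, sub_add_cancel]

theorem ZMod.sum_univ_four {M : Type*} [AddCommMonoid M] (f : ZMod 4 → M) :
    ∑ x, f x = f 0 + f 1 + f 2 + f 3 :=
  Fin.sum_univ_four f

theorem parityChar_dotProduct_zmod_four (v : ZMod 4 → R) :
    parityChar 4 R ⬝ᵥ v = v 0 - v 1 + v 2 - v 3 := by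
  rw [dotProduct, ZMod.sum_univ_four]
  change (-1) ^ 0 * v 0 + (-1) ^ 1 * v 1 + (-1) ^ 2 * v 2 + (-1) ^ 3 * v 3 = _
  ring

theorem det_circulant_zmod_four (v : ZMod 4 → R) :
    (circulant v).det = (v 0 + v 1 + v 2 + v 3) * (v 0 - v 1 + v 2 - v 3) *
      ((v 0 - v 2) ^ 2 + (v 1 - v 3) ^ 2) := by
  have entries : (circulant v : Matrix (Fin 4) (Fin 4) R) =
      !![v 0, v 3, v 2, v 1; v 1, v 0, v 3, v 2; v 2, v 1, v 0, v 3; v 3, v 2, v 1, v 0] := by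
    ext i j
    fin_cases i <;> fin_cases j <;> rfl
  -- `ZMod 4` is `Fin 4` by definition, so the Laplace expansion over `Fin` applies.
  change (circulant v : Matrix (Fin 4) (Fin 4) R).det = _
  rw [entries]
  simp [det_succ_row_zero, Fin.sum_univ_succ, Fin.succAbove]
  ring

theorem stmt_18
    (ω : ZMod 4 → ℕ) (hω : ω 0 = 4 ∧ ω 1 = 7 ∧ ω 2 = 9 ∧ ω 3 = 7)
    (A : ℕ → Matrix (ZMod 4) (ZMod 4) ℚ)
    (hA : ∀ (j : ℕ) (g h : ZMod 4), A j g h = ((ω (h - g)).choose j : ℚ)) :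
    (A 1).det ≠ 0 ∧ (A 2).det = 0 ∧
    ∃ v : ZMod 4 → ℚ, (A 2).mulVec v = 0 ∧ (A 1).mulVec v ≠ 0 := by
  obtain ⟨h0, h1, h2, h3⟩ := hω
  have hA_circulant : ∀ k, A k = (circulant fun x => ((ω x).choose k : ℚ))ᵀ := fun k => by
    ext g h
    rw [hA, transpose_apply, circulant_apply]
  have hA_parityChar : ∀ k, A k *ᵥ parityChar 4 ℚ =
      ((ω 0).choose k - (ω 1).choose k + (ω 2).choose k - (ω 3).choose k : ℚ) •
        parityChar 4 ℚ := fun k => by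
    rw [hA_circulant, mulVec_transpose, vecMul_circulant_parityChar (by decide),
      parityChar_dotProduct_zmod_four]
  refine ⟨?_, ?_, parityChar 4 ℚ, ?_, ?_⟩
  · rw [hA_circulant, det_transpose, det_circulant_zmod_four]
    norm_num [h0, h1, h2, h3, Nat.choose]
  · rw [hA_circulant, det_transpose, det_circulant_zmod_four]
    norm_num [h0, h1, h2, h3, Nat.choose]
  · rw [hA_parityChar]
    norm_num [h0, h1, h2, h3, Nat.choose]
  · rw [hA_parityChar]
    norm_num [h0, h1, h2, h3, Nat.choose]
    exact parityChar_ne_zero 4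
end

section
/- Let n = 3, m = 2, k = 2, and let M be the 12 × 8 restriction matrix over ℚ with rows indexed by pairs (i, j) where i is a 2-element subset of Fin 3 (in increasing order) and j ∈ (Fin 2)^2, columns indexed by functions f : Fin 3 → Fin 2, and entry 1 exactly when f restricted to i equals j. Then the kernel of M is one-dimensional, spanned by the vector whose entry at f is (-1)^{f(0)+f(1)+f(2)}. -/
/-!
Row `(s, j)` of `M` sums `v` over the functions that restrict to `j` on `s`. When `s` misses
exactly one point `t`, these are the two functions `f`, `f'` that differ only at `t`, so `M v = 0`
says precisely that flipping any single coordinate negates `v`; such `v` are the multiples of the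
parity vector `f ↦ (-1) ^ ∑ f`. Conversely the parity vector is killed by every row, since flipping
a coordinate outside `s` is a sign-reversing involution of the row's support.
-/

open Finset Function Matrix

lemma fin_two_rev_ne_self : ∀ x : Fin 2, x.rev ≠ x := by decide

lemma fin_two_eq_or_eq_rev : ∀ x y : Fin 2, x = y ∨ x = y.rev := by decide

lemma neg_one_pow_fin_two_rev {R : Type*} [Ring R] (x : Fin 2) :
    (-1 : R) ^ (x.rev : ℕ) = -(-1) ^ (x : ℕ) := by
  fin_cases x <;> simp

section Parity

variable {ι : Type*} [DecidableEq ι]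

def flipAt (t : ι) (f : ι → Fin 2) : ι → Fin 2 := update f t (f t).rev

lemma flipAt_flipAt (t : ι) (f : ι → Fin 2) : flipAt t (flipAt t f) = f := by
  simp [flipAt]

lemma flipAt_ne (t : ι) (f : ι → Fin 2) : flipAt t f ≠ f := fun h =>
  fin_two_rev_ne_self (f t) (by simpa [flipAt] using congrFun h t)

lemma eq_or_eq_flipAt_of_forall_ne {t : ι} {f g : ι → Fin 2} (h : ∀ i ≠ t, g i = f i) :
    g = f ∨ g = flipAt t f := by
  rcases fin_two_eq_or_eq_rev (g t) (f t) with ht | ht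
  · left
    ext1 i
    by_cases hi : i = t
    · rw [hi, ht]
    · rw [h i hi]
  · right
    ext1 i
    by_cases hi : i = t
    · rw [hi, ht, flipAt, update_self]
    · rw [h i hi, flipAt, update_of_ne hi]

variable [Fintype ι] (R : Type*) [CommRing R]

def parity (f : ι → Fin 2) : R := (-1) ^ ∑ i, (f i : ℕ)

variable {R}

lemma parity_flipAt (t : ι) (f : ι → Fin 2) : parity R (flipAt t f) = -parity R f := by
  have hrest : ∑ i ∈ {t}ᶜ, (flipAt t f i : ℕ) = ∑ i ∈ {t}ᶜ, (f i : ℕ) :=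
    sum_congr rfl fun i hi => by simp_all [flipAt]
  rw [parity, parity, Fintype.sum_eq_add_sum_compl t, Fintype.sum_eq_add_sum_compl t, hrest,
    pow_add, pow_add, flipAt, update_self, neg_one_pow_fin_two_rev, neg_mul]

lemma eq_smul_parity_of_flipAt {v : (ι → Fin 2) → R} (hv : ∀ t f, v (flipAt t f) = -v f) :
    v = v 0 • parity R := by
  let χ : Finset ι → ι → Fin 2 := fun S i => if i ∈ S then 1 else 0
  have hχ : ∀ S, v (χ S) = v 0 * parity R (χ S) := by
    intro S
    induction S using Finset.induction_on with
    | empty => simp [χ, parity, Pi.zero_def]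
    | insert a S ha ih =>
      have : χ (insert a S) = flipAt a (χ S) := by
        ext i
        by_cases hi : i = a <;> simp [χ, flipAt, hi, ha]
      rw [this, hv, parity_flipAt, ih, mul_neg]
  funext f
  have hf : f = χ {i | f i = 1} := by
    ext i
    simp only [χ, mem_filter, mem_univ, true_and]
    split_ifs <;> omega
  rw [hf, hχ]
  rfl

end Parity

section RestrictionMatrix

variable {ι : Type*} [LinearOrder ι] {k : ℕ} {α : Type*}

lemma restrict_eq_iff {s : Finset ι} (hs : s.card = k) {f g : ι → α} :
    (∀ a, g (s.orderEmbOfFin hs a) = f (s.orderEmbOfFin hs a)) ↔ ∀ i ∈ s, g i = f i := by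
  rw [← Set.forall_mem_range (f := s.orderEmbOfFin hs) (p := fun i => g i = f i),
    range_orderEmbOfFin]
  rfl

variable (ι k α) (R : Type*) [DecidableEq α]

def restrictionMatrix [Zero R] [One R] :
    Matrix ({s : Finset ι // s.card = k} × (Fin k → α)) (ι → α) R :=
  fun p f => if ∀ a, f (p.1.1.orderEmbOfFin p.1.2 a) = p.2 a then 1 else 0

variable {ι k α R} [Fintype ι]

lemma restrictionMatrix_mulVec [Fintype α] [NonAssocSemiring R] (v : (ι → α) → R)
    (s : Finset ι) (hs : s.card = k) (j : Fin k → α) :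
    (restrictionMatrix ι k α R *ᵥ v) (⟨s, hs⟩, j) =
      ∑ f with ∀ a, f (s.orderEmbOfFin hs a) = j a, v f := by
  simp [mulVec, dotProduct, restrictionMatrix, sum_filter]

variable [CommRing R]

lemma restrictionMatrix_mulVec_parity (hk : k < Fintype.card ι) :
    restrictionMatrix ι k (Fin 2) R *ᵥ parity R = 0 := by
  ext ⟨⟨s, hs⟩, j⟩
  obtain ⟨t, -, ht⟩ : ∃ t ∈ univ, t ∉ s :=
    exists_mem_notMem_of_card_lt_card (by rwa [hs, card_univ])
  have hflip : ∀ f, ∀ i ∈ s, flipAt t f i = f i := fun f i hi =>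
    update_of_ne (ne_of_mem_of_not_mem hi ht) _ _
  rw [restrictionMatrix_mulVec, Pi.zero_apply]
  refine sum_involution (fun f _ => flipAt t f) (fun f _ => by rw [parity_flipAt, add_neg_cancel])
    (fun f _ _ => flipAt_ne t f) (fun f hf => ?_) (fun f _ => flipAt_flipAt t f)
  simp only [mem_filter, mem_univ, true_and] at hf ⊢
  intro a
  rw [← hf a, hflip f _ (orderEmbOfFin_mem s hs a)]

lemma flipAt_of_restrictionMatrix_mulVec_eq_zero (hk : Fintype.card ι = k + 1)
    {v : (ι → Fin 2) → R} (hv : restrictionMatrix ι k (Fin 2) R *ᵥ v = 0) (t : ι)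
    (f : ι → Fin 2) : v (flipAt t f) = -v f := by
  have hs : (univ.erase t).card = k := by rw [card_erase_of_mem (mem_univ t), card_univ, hk]; rfl
  have hfiber : ({g | ∀ a, g ((univ.erase t).orderEmbOfFin hs a) =
      f ((univ.erase t).orderEmbOfFin hs a)} : Finset (ι → Fin 2)) = {f, flipAt t f} := by
    ext g
    simp only [mem_filter, mem_univ, true_and, restrict_eq_iff, mem_erase, mem_insert,
      mem_singleton]
    refine ⟨fun h => eq_or_eq_flipAt_of_forall_ne fun i hi => h i ⟨hi, trivial⟩, ?_⟩
    rintro (rfl | rfl) i ⟨hi, -⟩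
    exacts [rfl, update_of_ne hi _ _]
  have hrow := congrFun hv (⟨univ.erase t, hs⟩, fun a => f ((univ.erase t).orderEmbOfFin hs a))
  rw [restrictionMatrix_mulVec, hfiber, sum_pair (flipAt_ne t f).symm, Pi.zero_apply] at hrow
  exact eq_neg_of_add_eq_zero_right hrow

theorem ker_restrictionMatrix_eq_span_parity (hk : Fintype.card ι = k + 1) :
    LinearMap.ker (restrictionMatrix ι k (Fin 2) R).mulVecLin = Submodule.span R {parity R} := by
  ext v
  rw [LinearMap.mem_ker, mulVecLin_apply, Submodule.mem_span_singleton]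
  constructor
  · intro hv
    exact ⟨v 0, (eq_smul_parity_of_flipAt
      (flipAt_of_restrictionMatrix_mulVec_eq_zero hk hv)).symm⟩
  · rintro ⟨c, rfl⟩
    rw [mulVec_smul, restrictionMatrix_mulVec_parity (by omega), smul_zero]

end RestrictionMatrix

theorem stmt_19
    (M : Matrix ({s : Finset (Fin 3) // s.card = 2} × (Fin 2 → Fin 2))
          (Fin 3 → Fin 2) ℚ)
    (hM : ∀ p f, M p f =
      if ∀ a : Fin 2, f (p.1.1.orderEmbOfFin p.1.2 a) = p.2 a then 1 else 0) :
    LinearMap.ker M.mulVecLin =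
      Submodule.span ℚ
        {fun f : Fin 3 → Fin 2 =>
          (-1 : ℚ) ^ ((f 0 : ℕ) + (f 1 : ℕ) + (f 2 : ℕ))} := by
  obtain rfl : M = restrictionMatrix (Fin 3) 2 (Fin 2) ℚ := Matrix.ext hM
  rw [ker_restrictionMatrix_eq_span_parity (Fintype.card_fin 3)]
  congr 2
  ext f
  rw [parity, Fin.sum_univ_three]
end
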